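/- Let I be a two-sided ideal of a ring R. Then: (i) if R is purely infinite then so is R/I, and if R is properly purely infinite then so is R/I; (ii) if moreover I is s-unital (as a ring in its own right), then R purely infinite implies I is purely infinite, and R properly purely infinite implies I is properly purely infinite. -/

import Mathlib

/-- `x ≼ y` for square matrices over a (possibly nonunital) ring: `x = α * y * β`
for some rectangular matrices `α`, `β`. -/
def MatSub {R : Type*} [NonUnitalRing R] {k n : ℕ}
    (x : Matrix (Fin k) (Fin k) R) (y : Matrix (Fin n) (Fin n) R) : Prop :=
  ∃ (α : Matrix (Fin k) (Fin n) R) (β : Matrix (Fin n) (Fin k) R), x = α * y * β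

/-- `a ⊕ b ≼ c` for ring elements: the block-diagonal matrix `diag(a, b)` satisfies
`diag(a,b) ≼ (c)` as square matrices. -/
def PairSub {R : Type*} [NonUnitalRing R] (a b c : R) : Prop :=
  MatSub !![a, 0; 0, b] !![c]

/-- `a ≼ b` for ring elements: `a = α * b * β` for some ring elements. -/
def ElemSub {R : Type*} [NonUnitalRing R] (a b : R) : Prop :=
  ∃ α β : R, a = α * b * β

/-- `K(a) = { x | a ⊕ x ≼ a }`. -/
def KSet {R : Type*} [NonUnitalRing R] (a : R) : Set R := { x | PairSub a x a }

/-- An element `a` is infinite if `a ⊕ x ≼ a` for some nonzero `x`, i.e. `K(a) ≠ 0`. -/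
def IsInfiniteElem {R : Type*} [NonUnitalRing R] (a : R) : Prop :=
  ∃ x : R, x ≠ 0 ∧ PairSub a x a

/-- An element `a` is properly infinite if `a ≠ 0` and `a ⊕ a ≼ a`. -/
def IsProperlyInfiniteElem {R : Type*} [NonUnitalRing R] (a : R) : Prop :=
  a ≠ 0 ∧ PairSub a a a

/-- A ring is s-unital if each element `x` admits `u, v` with `u * x = x` and `x * v = x`. -/
def IsSUnitalRing (R : Type*) [NonUnitalRing R] : Prop :=
  ∀ x : R, (∃ u : R, u * x = x) ∧ (∃ v : R, x * v = x)

/-- `b` belongs to `RaR`, the set of finite sums `Σ xᵢ * a * yᵢ`. -/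
def MemRaR {R : Type*} [NonUnitalRing R] (a b : R) : Prop :=
  ∃ (n : ℕ) (x y : Fin n → R), b = ∑ i, x i * a * y i

/-- A (possibly nonunital) ring is a division ring: it has a nonzero multiplicative identity
with respect to which every nonzero element is two-sided invertible. -/
def IsDivisionRingPred (R : Type*) [NonUnitalRing R] : Prop :=
  ∃ u : R, u ≠ 0 ∧ (∀ x : R, u * x = x ∧ x * u = x) ∧
    ∀ x : R, x ≠ 0 → ∃ y : R, x * y = u ∧ y * x = u

/-- A ring `R` is purely infinite if no quotient of `R` by a two-sided ideal is a division
ring, and `b ∈ RaR` implies `b = x * a * y` for some `x, y ∈ R`. -/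
def IsPurelyInfiniteRing (R : Type*) [NonUnitalRing R] : Prop :=
  (∀ I : TwoSidedIdeal R, ¬ IsDivisionRingPred I.ringCon.Quotient) ∧
  ∀ a b : R, MemRaR a b → ElemSub b a

/-- A ring is properly purely infinite if every nonzero element is properly infinite. -/
def IsProperlyPurelyInfiniteRing (R : Type*) [NonUnitalRing R] : Prop :=
  ∀ a : R, a ≠ 0 → IsProperlyInfiniteElem a

/-- An idempotent `e` is infinite if `e ∼ f ≤ e` for some idempotent `f ≠ e`. -/
def IsInfiniteIdem {R : Type*} [NonUnitalRing R] (e : R) : Prop :=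
  IsIdempotentElem e ∧ ∃ f : R, IsIdempotentElem f ∧ (∃ x y : R, e = x * y ∧ f = y * x) ∧
    e * f = f ∧ f * e = f ∧ f ≠ e

/-- An exchange ring: for each `x` there are an idempotent `e` and elements `r, s` with
`e = x * r = x + s - x * s`. -/
def IsExchangeRing (R : Type*) [NonUnitalRing R] : Prop :=
  ∀ x : R, ∃ e r s : R, IsIdempotentElem e ∧ e = x * r ∧ e = x + s - x * s

/-- A ring has local units if every finite subset is contained in a corner `eRe`
for some idempotent `e`. -/
def HasLocalUnits (R : Type*) [NonUnitalRing R] : Prop :=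
  ∀ s : Finset R, ∃ e : R, IsIdempotentElem e ∧ ∀ x ∈ s, ∃ r : R, x = e * r * e

/-!
Both conditions of pure infiniteness, and proper infiniteness of elements, are existential
statements about products, so they are carried forward by any surjective ring homomorphism
`f : A → B`; a division-ring quotient of `B` pulls back to the division-ring quotient
`A / ker` of `A`. This settles quotients.

For an s-unital ideal `I`, a division-ring quotient `I/J` with identity `[w]` extends to the
surjective homomorphism `R → I/J`, `r ↦ [w r w]`, so it would give one of `R`. A relation
`b = α a β` in `R` between elements of `I` moves into `I` as `b = (u α) a (β v)`, where
`u b = b = b v`.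
-/

open Function

namespace RingCon

variable {R : Type*} [NonUnitalRing R] (c : RingCon R)

def mkₙ : R →ₙ+* c.Quotient where
  toFun := (↑)
  map_mul' := c.coe_mul
  map_zero' := c.coe_zero
  map_add' := c.coe_add

@[simp] theorem mkₙ_apply (x : R) : c.mkₙ x = x := rfl

theorem mkₙ_surjective : Surjective c.mkₙ := Quotient.mk''_surjective

end RingCon

section Transfer

variable {A B : Type*} [NonUnitalRing A] [NonUnitalRing B]

theorem pairSub_iff {a b c : A} :
    PairSub a b c ↔ ∃ p q r s : A,
      a = p * c * r ∧ 0 = p * c * s ∧ 0 = q * c * r ∧ b = q * c * s := by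
  constructor
  · rintro ⟨α, β, h⟩
    have h' := fun i j => Matrix.ext_iff.mpr h i j
    refine ⟨α 0 0, α 1 0, β 0 0, β 0 1, ?_, ?_, ?_, ?_⟩
    · simpa [Matrix.mul_apply, mul_assoc] using h' 0 0
    · simpa [Matrix.mul_apply, mul_assoc] using h' 0 1
    · simpa [Matrix.mul_apply, mul_assoc] using h' 1 0
    · simpa [Matrix.mul_apply, mul_assoc] using h' 1 1
  · rintro ⟨p, q, r, s, h1, h2, h3, h4⟩
    refine ⟨!![p; q], !![r, s], ?_⟩
    ext i j
    fin_cases i <;> fin_cases j <;> simpa [Matrix.mul_apply]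

theorem PairSub.map (f : A →ₙ+* B) {a b c : A} (h : PairSub a b c) :
    PairSub (f a) (f b) (f c) := by
  obtain ⟨p, q, r, s, h1, h2, h3, h4⟩ := pairSub_iff.1 h
  refine pairSub_iff.2 ⟨f p, f q, f r, f s, ?_, ?_, ?_, ?_⟩ <;>
    simp only [← map_mul, ← h1, ← h2, ← h3, ← h4, map_zero]

theorem ElemSub.map (f : A →ₙ+* B) {a b : A} (h : ElemSub a b) : ElemSub (f a) (f b) := by
  obtain ⟨α, β, rfl⟩ := h
  exact ⟨f α, f β, by simp⟩

theorem MemRaR.map (f : A →ₙ+* B) {a b : A} (h : MemRaR a b) : MemRaR (f a) (f b) := by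
  obtain ⟨n, x, y, rfl⟩ := h
  exact ⟨n, f ∘ x, f ∘ y, by simp⟩

theorem MemRaR.exists_lift {f : A →ₙ+* B} (hf : Surjective f) {a : A} {b : B}
    (h : MemRaR (f a) b) : ∃ b', f b' = b ∧ MemRaR a b' := by
  obtain ⟨n, x, y, rfl⟩ := h
  choose x' hx using fun i => hf (x i)
  choose y' hy using fun i => hf (y i)
  exact ⟨_, by simp [hx, hy], n, x', y', rfl⟩

theorem isDivisionRingPred_quotient_ker {f : A →ₙ+* B} (hf : Surjective f)
    (h : IsDivisionRingPred B) : IsDivisionRingPred (TwoSidedIdeal.ker f).ringCon.Quotient := by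
  set c := (TwoSidedIdeal.ker f).ringCon
  have mk_eq_mk (x y : A) : (x : c.Quotient) = y ↔ f x = f y := c.eq
  have mk_ne_zero (x : A) : (x : c.Quotient) ≠ 0 ↔ f x ≠ 0 := by
    rw [← c.coe_zero, Ne, mk_eq_mk, map_zero]
  obtain ⟨u, hu0, hu, hinv⟩ := h
  obtain ⟨e, rfl⟩ := hf u
  refine ⟨e, (mk_ne_zero e).2 hu0, fun z => ?_, fun z hz => ?_⟩
  · obtain ⟨x, rfl⟩ := c.mkₙ_surjective z
    simpa only [c.mkₙ_apply, ← c.coe_mul, mk_eq_mk, map_mul] using hu (f x)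
  · obtain ⟨x, rfl⟩ := c.mkₙ_surjective z
    obtain ⟨y', hy⟩ := hinv (f x) ((mk_ne_zero x).1 hz)
    obtain ⟨y, rfl⟩ := hf y'
    exact ⟨y, by simpa only [c.mkₙ_apply, ← c.coe_mul, mk_eq_mk, map_mul] using hy⟩

theorem IsPurelyInfiniteRing.of_surjective {f : A →ₙ+* B} (hf : Surjective f)
    (h : IsPurelyInfiniteRing A) : IsPurelyInfiniteRing B := by
  refine ⟨fun J hJ => ?_, fun a b hab => ?_⟩
  · exact h.1 _ (isDivisionRingPred_quotient_ker (f := J.ringCon.mkₙ.comp f)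
      (J.ringCon.mkₙ_surjective.comp hf) hJ)
  · obtain ⟨a, rfl⟩ := hf a
    obtain ⟨b, rfl, hab'⟩ := hab.exists_lift hf
    exact (h.2 a b hab').map f

theorem IsProperlyPurelyInfiniteRing.of_surjective {f : A →ₙ+* B} (hf : Surjective f)
    (h : IsProperlyPurelyInfiniteRing A) : IsProperlyPurelyInfiniteRing B := by
  intro b hb
  obtain ⟨a, rfl⟩ := hf b
  exact ⟨hb, (h a (by rintro rfl; exact hb (map_zero f))).2.map f⟩

end Transfer

namespace TwoSidedIdeal

variable {R : Type*} [NonUnitalRing R] (I : TwoSidedIdeal R)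

def sandwich (w : I) (r : R) : I := ⟨w * r * w, I.mul_mem_left _ _ w.2⟩

def sandwichHom (J : TwoSidedIdeal I) (w : I)
    (hw : ∀ z : J.ringCon.Quotient, (w : J.ringCon.Quotient) * z = z ∧ z * w = z) :
    R →ₙ+* J.ringCon.Quotient where
  toFun r := (I.sandwich w r : J.ringCon.Quotient)
  map_mul' x y := by
    let wx : I := ⟨w * x, I.mul_mem_right _ _ w.2⟩
    let yw : I := ⟨y * w, I.mul_mem_left _ _ w.2⟩
    have hxy : I.sandwich w (x * y) = wx * yw :=
      Subtype.ext (by simp [sandwich, wx, yw, mul_assoc])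
    have hx : I.sandwich w x = wx * w := rfl
    have hy : I.sandwich w y = w * yw := Subtype.ext (by simp [sandwich, yw, mul_assoc])
    simp only [hxy, hx, hy, J.ringCon.coe_mul, (hw _).1, (hw _).2]
  map_zero' := by
    have : I.sandwich w 0 = 0 := Subtype.ext (by simp [sandwich])
    simp only [this, J.ringCon.coe_zero]
  map_add' x y := by
    have : I.sandwich w (x + y) = I.sandwich w x + I.sandwich w y :=
      Subtype.ext (by simp [sandwich, mul_add, add_mul])
    simp only [this, J.ringCon.coe_add]

theorem sandwichHom_surjective (J : TwoSidedIdeal I) (w : I)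
    (hw : ∀ z : J.ringCon.Quotient, (w : J.ringCon.Quotient) * z = z ∧ z * w = z) :
    Surjective (I.sandwichHom J w hw) := by
  intro z
  obtain ⟨x, rfl⟩ := J.ringCon.mkₙ_surjective z
  refine ⟨x, ?_⟩
  change ((w * x * w : I) : J.ringCon.Quotient) = x
  rw [J.ringCon.coe_mul, J.ringCon.coe_mul, (hw _).2, (hw _).1]

theorem not_isDivisionRingPred_quotient
    (hR : ∀ L : TwoSidedIdeal R, ¬ IsDivisionRingPred L.ringCon.Quotient)
    (J : TwoSidedIdeal I) : ¬ IsDivisionRingPred J.ringCon.Quotient := by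
  rintro ⟨u, hu0, hu, hinv⟩
  obtain ⟨w, rfl⟩ := J.ringCon.mkₙ_surjective u
  exact hR _ (isDivisionRingPred_quotient_ker (I.sandwichHom_surjective J w hu)
    ⟨_, hu0, hu, hinv⟩)

variable {I}

theorem eq_mul_mul_of_sandwich {u v x a : I} (hx : u * x * v = x) {α β : R}
    (h : (x : R) = α * a * β) :
    x = ⟨u * α, I.mul_mem_right _ _ u.2⟩ * a * ⟨β * v, I.mul_mem_left _ _ v.2⟩ := by
  apply Subtype.ext
  calc (x : R) = u * x * v := congrArg Subtype.val hx.symm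
    _ = _ := by rw [h]; simp only [MulMemClass.coe_mul, mul_assoc]

theorem elemSub_of_coe (hI : IsSUnitalRing I) {a b : I} (h : ElemSub (b : R) a) :
    ElemSub b a := by
  obtain ⟨α, β, h⟩ := h
  obtain ⟨⟨u, hu⟩, ⟨v, hv⟩⟩ := hI b
  exact ⟨_, _, eq_mul_mul_of_sandwich (by rw [hu, hv]) h⟩

theorem pairSub_self_of_coe (hI : IsSUnitalRing I) {a : I} (h : PairSub (a : R) a a) :
    PairSub a a a := by
  obtain ⟨p, q, r, s, h1, h2, h3, h4⟩ := pairSub_iff.1 h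
  obtain ⟨⟨u, hu⟩, ⟨v, hv⟩⟩ := hI a
  have ha : u * a * v = a := by rw [hu, hv]
  have h0 : u * 0 * v = (0 : I) := by simp
  exact pairSub_iff.2 ⟨_, _, _, _, eq_mul_mul_of_sandwich ha h1, eq_mul_mul_of_sandwich h0 h2,
    eq_mul_mul_of_sandwich h0 h3, eq_mul_mul_of_sandwich ha h4⟩

theorem isPurelyInfiniteRing (hI : IsSUnitalRing I) (hR : IsPurelyInfiniteRing R) :
    IsPurelyInfiniteRing I :=
  ⟨I.not_isDivisionRingPred_quotient hR.1, fun _ _ hab =>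
    elemSub_of_coe hI (hR.2 _ _ (hab.map (NonUnitalSubringClass.subtype I)))⟩

theorem isProperlyPurelyInfiniteRing (hI : IsSUnitalRing I)
    (hR : IsProperlyPurelyInfiniteRing R) : IsProperlyPurelyInfiniteRing I := fun a ha =>
  ⟨ha, pairSub_self_of_coe hI (hR a (by simpa using ha)).2⟩

end TwoSidedIdeal

/-- Lemma 3.8 (pinftoidealquo): let `I` be a two-sided ideal of a ring `R`.
(i) If `R` is (properly) purely infinite, then so is `R/I`.
(ii) If moreover `I` is s-unital, then `R` (properly) purely infinite implies that the ring `I`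
is (properly) purely infinite. -/
theorem purelyInfinite_passes_to_quotients_and_sunital_ideals
    {R : Type*} [NonUnitalRing R] (I : TwoSidedIdeal R) :
    ((IsPurelyInfiniteRing R → IsPurelyInfiniteRing I.ringCon.Quotient) ∧
     (IsProperlyPurelyInfiniteRing R → IsProperlyPurelyInfiniteRing I.ringCon.Quotient)) ∧
    (IsSUnitalRing I →
      (IsPurelyInfiniteRing R → IsPurelyInfiniteRing I) ∧
      (IsProperlyPurelyInfiniteRing R → IsProperlyPurelyInfiniteRing I)) :=
  ⟨⟨.of_surjective I.ringCon.mkₙ_surjective, .of_surjective I.ringCon.mkₙ_surjective⟩,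
    fun hI => ⟨I.isPurelyInfiniteRing hI, I.isProperlyPurelyInfiniteRing hI⟩⟩
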